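/- arXiv:2508.01148 — 2 statements merged into one kernel-verified Lean document; each statement's English description precedes it below -/
import Mathlib

section
/- Let τ₁ and τ₂ be nonzero vectors in a real inner product space with ⟪τ₁, τ₂⟫ = 0. Then 1 − cos(τ₁ + τ₂, τ₂) ≤ ‖τ₁‖² / (2 ‖τ₂‖²). In particular, when ‖τ₂‖ is much larger than ‖τ₁‖, the merged vector τ₁ + τ₂ is directionally almost identical to the high-norm task vector τ₂. -/
open scoped RealInnerProductSpace

/-- For nonzero orthogonal task vectors `τ₁, τ₂` in a real inner product space,
`1 − cos(τ₁ + τ₂, τ₂) ≤ ‖τ₁‖² / (2‖τ₂‖²)`: when `‖τ₂‖ ≫ ‖τ₁‖`, the merged vector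
`τ₁ + τ₂` is directionally almost identical to the high-norm task vector `τ₂`. -/
theorem one_sub_cos_merged_le
    {E : Type*} [NormedAddCommGroup E] [InnerProductSpace ℝ E]
    (τ₁ τ₂ : E) (hτ₁ : τ₁ ≠ 0) (hτ₂ : τ₂ ≠ 0) (horth : ⟪τ₁, τ₂⟫ = 0) :
    1 - ⟪τ₁ + τ₂, τ₂⟫ / (‖τ₁ + τ₂‖ * ‖τ₂‖) ≤ ‖τ₁‖ ^ 2 / (2 * ‖τ₂‖ ^ 2) := by
  set a := ‖τ₁‖ with ha'
  set b := ‖τ₂‖ with hb'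
  set s := ‖τ₁ + τ₂‖ with hs'
  have ha : 0 < a := norm_pos_iff.mpr hτ₁
  have hb : 0 < b := norm_pos_iff.mpr hτ₂
  have hinner : ⟪τ₁ + τ₂, τ₂⟫ = b ^ 2 := by
    rw [inner_add_left, horth, zero_add, real_inner_self_eq_norm_sq]
  have hs2 : s ^ 2 = a ^ 2 + b ^ 2 := by
    rw [hs', ha', hb', @norm_add_sq_real, horth]; ring
  have hs : 0 < s := by
    rcases (norm_nonneg (τ₁ + τ₂)).lt_or_eq with h | h
    · exact h
    · exfalso; rw [hs', ← h] at hs2; nlinarith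
  have hub : s * (2 * b) ≤ 2 * b ^ 2 + a ^ 2 := by
    nlinarith [sq_nonneg (2 * b * s - (2 * b ^ 2 + a ^ 2)), sq_nonneg (2 * b * s)]
  rw [hinner]
  have key : (1 : ℝ) - b ^ 2 / (s * b) = (s * b - b ^ 2) / (s * b) := by
    field_simp
  rw [key, div_le_div_iff₀ (by positivity) (by positivity)]
  nlinarith [mul_pos hs hb, mul_pos ha hb, mul_pos (mul_pos hs hb) (mul_pos hb hb)]
end

section
/- Let τ₁ and τ₂ be vectors in a real inner product space with ‖τ₁‖ < ‖τ₂‖ (in particular τ₂ ≠ 0 and τ₁ + τ₂ ≠ 0). Then, without any orthogonality assumption, cos(τ₁ + τ₂, τ₂) ≥ (‖τ₂‖ − ‖τ₁‖) / (‖τ₂‖ + ‖τ₁‖). Hence a sufficiently large norm disparity forces the merged vector to align with the high-norm task vector. -/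
open scoped RealInnerProductSpace

/-- For task vectors `τ₁, τ₂` with `‖τ₁‖ < ‖τ₂‖` (so `τ₂ ≠ 0` and `τ₁ + τ₂ ≠ 0`),
without any orthogonality assumption, the cosine similarity of the merged vector with
the high-norm component satisfies
`cos(τ₁ + τ₂, τ₂) ≥ (‖τ₂‖ − ‖τ₁‖) / (‖τ₂‖ + ‖τ₁‖)`. -/
theorem cos_merged_ge_of_norm_lt
    {E : Type*} [NormedAddCommGroup E] [InnerProductSpace ℝ E]
    (τ₁ τ₂ : E) (hlt : ‖τ₁‖ < ‖τ₂‖) :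
    (‖τ₂‖ - ‖τ₁‖) / (‖τ₂‖ + ‖τ₁‖) ≤ ⟪τ₁ + τ₂, τ₂⟫ / (‖τ₁ + τ₂‖ * ‖τ₂‖) := by
  have ha : 0 ≤ ‖τ₁‖ := norm_nonneg _
  have hb : 0 < ‖τ₂‖ := lt_of_le_of_lt ha hlt
  have habs : |⟪τ₁, τ₂⟫| ≤ ‖τ₁‖ * ‖τ₂‖ := abs_real_inner_le_norm τ₁ τ₂
  have hexp : ⟪τ₁ + τ₂, τ₂⟫ = ⟪τ₁, τ₂⟫ + ‖τ₂‖ ^ 2 := by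
    rw [inner_add_left, real_inner_self_eq_norm_sq]
  have hIlb : ‖τ₂‖ * (‖τ₂‖ - ‖τ₁‖) ≤ ⟪τ₁ + τ₂, τ₂⟫ := by
    have := abs_le.mp habs
    nlinarith [this.1]
  have hIpos : 0 < ⟪τ₁ + τ₂, τ₂⟫ := lt_of_lt_of_le (by nlinarith) hIlb
  have hne : τ₁ + τ₂ ≠ 0 := by
    intro h
    rw [h, inner_zero_left] at hIpos
    exact lt_irrefl _ hIpos
  have hc : 0 < ‖τ₁ + τ₂‖ := norm_pos_iff.mpr hne
  have hcle : ‖τ₁ + τ₂‖ ≤ ‖τ₁‖ + ‖τ₂‖ := norm_add_le _ _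
  rw [div_le_div_iff₀ (by linarith) (by positivity)]
  nlinarith [mul_pos hc hb, mul_le_mul_of_nonneg_left hcle (le_of_lt hb)]
end
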